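/- (Equivalence of the least-squares formulation and the Cholesky formulation.) Let X ∈ ℝ^{m×N} have full column rank, so H = XᵀX is invertible, and let H⁻¹ = L Lᵀ be its Cholesky decomposition with L lower triangular with positive diagonal entries. Fix 1 ≤ t ≤ N−1, w ∈ ℝ^N, and q_t ∈ ℝ. Then the unique minimizer over v ∈ ℝ^{N−t} of the function v ↦ ½‖(q_t − w_t) X_t + Σ_{j=t+1}^{N} (v_{j−t} − w_j) X_j‖² is v* = w_{≥t+1} + Δ^{(t)}, where Δ^{(t)} = −(w_t − q_t) · L_{≥t+1,t} / L_{tt} ∈ ℝ^{N−t}, L_{≥t+1,t} denoting the entries t+1,…,N of the t-th column of L. -/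

import Mathlib

open Matrix

private lemma dotProduct_sum' {m n : ℕ} (r : Fin m → ℝ) (c : Fin n → ℝ) (Y : Fin n → Fin m → ℝ) :
    r ⬝ᵥ (∑ k, c k • Y k) = ∑ k, c k * (r ⬝ᵥ Y k) := by
  simp only [dotProduct, Finset.sum_apply, Pi.smul_apply, smul_eq_mul, Finset.mul_sum]
  rw [Finset.sum_comm]
  exact Finset.sum_congr rfl fun k _ => Finset.sum_congr rfl fun i _ => by ring

private lemma sum_split {t N : ℕ} (ht1 : 1 ≤ t) (ht2 : t ≤ N - 1) (g : Fin N → ℝ)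
    (h0 : ∀ k : Fin N, k.val < t - 1 → g k = 0) :
    ∑ k : Fin N, g k =
      g ⟨t - 1, by omega⟩ + ∑ j : Fin (N - t), g ⟨t + j.val, by have := j.isLt; omega⟩ := by
  have hN : t < N := by omega
  set G : ℕ → ℝ := fun k => if h : k < N then g ⟨k, h⟩ else 0 with hG
  have h1 : ∑ k : Fin N, g k = ∑ k ∈ Finset.range N, G k := by
    rw [← Fin.sum_univ_eq_sum_range]
    exact Finset.sum_congr rfl fun k _ => by simp [hG, k.isLt]
  have h2 : ∑ k ∈ Finset.range N, G k =
      ∑ k ∈ Finset.range t, G k + ∑ k ∈ Finset.Ico t N, G k := by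
    rw [Finset.range_eq_Ico, Finset.range_eq_Ico]
    exact (Finset.sum_Ico_consecutive G (Nat.zero_le t) hN.le).symm
  obtain ⟨t', rfl⟩ : ∃ t', t = t' + 1 := ⟨t - 1, by omega⟩
  have h3 : ∑ k ∈ Finset.range (t' + 1), G k = G t' := by
    rw [Finset.sum_range_succ, Finset.sum_eq_zero, zero_add]
    intro k hk
    have hk' : k < t' := Finset.mem_range.mp hk
    simp only [hG, dif_pos (by omega : k < N)]
    exact h0 _ (by simpa using hk')
  have h4 : ∑ k ∈ Finset.Ico (t' + 1) N, G k =
      ∑ j ∈ Finset.range (N - (t' + 1)), G ((t' + 1) + j) := by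
    rw [Finset.sum_Ico_eq_sum_range]
  have h5 : ∑ j ∈ Finset.range (N - (t' + 1)), G ((t' + 1) + j) =
      ∑ j : Fin (N - (t' + 1)), G ((t' + 1) + j.val) := by
    rw [← Fin.sum_univ_eq_sum_range (fun j => G ((t' + 1) + j))]
  have h6 : ∀ j : Fin (N - (t' + 1)), G ((t' + 1) + j.val) =
      g ⟨(t' + 1) + j.val, by have := j.isLt; omega⟩ := by
    intro j
    simp only [hG, dif_pos (show (t' + 1) + j.val < N by have := j.isLt; omega)]
  have h7 : G t' = g ⟨t' + 1 - 1, by omega⟩ := by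
    simp only [hG, dif_pos (show t' < N by omega)]
    congr 1
  rw [h1, h2, h3, h4, h5, h7]
  congr 1
  exact Finset.sum_congr rfl fun j _ => h6 j

private lemma dot_expand {m : ℕ} (u v : Fin m → ℝ) :
    (u + v) ⬝ᵥ (u + v) = u ⬝ᵥ u + u ⬝ᵥ v + v ⬝ᵥ u + v ⬝ᵥ v := by
  rw [add_dotProduct, dotProduct_add, dotProduct_add]
  ring

private lemma quad_aux {m n : ℕ} (Y : Fin n → Fin m → ℝ) (b : Fin m → ℝ)
    (hind : ∀ e : Fin n → ℝ, (∑ j, e j • Y j) = 0 → e = 0)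
    (s : Fin n → ℝ)
    (hopt : ∀ j, Y j ⬝ᵥ (b + ∑ k, s k • Y k) = 0) :
    (∀ s' : Fin n → ℝ, (1 / 2 : ℝ) * ((b + ∑ k, s k • Y k) ⬝ᵥ (b + ∑ k, s k • Y k)) ≤
        (1 / 2 : ℝ) * ((b + ∑ k, s' k • Y k) ⬝ᵥ (b + ∑ k, s' k • Y k))) ∧
    (∀ s' : Fin n → ℝ, (∀ s'' : Fin n → ℝ,
        (1 / 2 : ℝ) * ((b + ∑ k, s' k • Y k) ⬝ᵥ (b + ∑ k, s' k • Y k)) ≤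
        (1 / 2 : ℝ) * ((b + ∑ k, s'' k • Y k) ⬝ᵥ (b + ∑ k, s'' k • Y k))) → s' = s) := by
  set r := b + ∑ k, s k • Y k with hr
  have hdecomp : ∀ s' : Fin n → ℝ,
      b + ∑ k, s' k • Y k = r + ∑ k, (s' k - s k) • Y k := by
    intro s'
    rw [hr]
    have : ∑ k, s' k • Y k = ∑ k, s k • Y k + ∑ k, (s' k - s k) • Y k := by
      rw [← Finset.sum_add_distrib]
      exact Finset.sum_congr rfl fun k _ => by rw [← add_smul]; ring_nf
    rw [this]
    abel
  have hcross : ∀ s' : Fin n → ℝ, r ⬝ᵥ (∑ k, (s' k - s k) • Y k) = 0 := by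
    intro s'
    rw [dotProduct_sum']
    refine Finset.sum_eq_zero fun k _ => ?_
    rw [dotProduct_comm, hopt k, mul_zero]
  have hexpand : ∀ s' : Fin n → ℝ,
      (b + ∑ k, s' k • Y k) ⬝ᵥ (b + ∑ k, s' k • Y k) =
        r ⬝ᵥ r + (∑ k, (s' k - s k) • Y k) ⬝ᵥ (∑ k, (s' k - s k) • Y k) := by
    intro s'
    have hc := hcross s'
    have hc2 : (∑ k, (s' k - s k) • Y k) ⬝ᵥ r = 0 := by rw [dotProduct_comm]; exact hc
    rw [hdecomp s', dot_expand, hc, hc2]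
    ring
  have hself : ∀ s'' : Fin n → ℝ,
      (b + ∑ k, s'' k • Y k) ⬝ᵥ (b + ∑ k, s'' k • Y k) = r ⬝ᵥ r +
        (∑ k, (s'' k - s k) • Y k) ⬝ᵥ (∑ k, (s'' k - s k) • Y k) := hexpand
  have hs0 : (b + ∑ k, s k • Y k) ⬝ᵥ (b + ∑ k, s k • Y k) = r ⬝ᵥ r := by
    have h := hexpand s
    simpa using h
  have hnn : ∀ z : Fin m → ℝ, 0 ≤ z ⬝ᵥ z := fun z =>
    Finset.sum_nonneg fun i _ => mul_self_nonneg _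
  constructor
  · intro s'
    rw [hs0, hexpand s']
    have := hnn (∑ k, (s' k - s k) • Y k)
    linarith
  · intro s' hmin
    have h := hmin s
    rw [hs0, hexpand s'] at h
    have hz : (∑ k, (s' k - s k) • Y k) ⬝ᵥ (∑ k, (s' k - s k) • Y k) = 0 :=
      le_antisymm (by linarith) (hnn _)
    have hz0 : (∑ k, (s' k - s k) • Y k) = 0 := by
      funext i
      have hsum := (Finset.sum_eq_zero_iff_of_nonneg
        (fun i _ => mul_self_nonneg ((∑ k, (s' k - s k) • Y k) i))).mp hz
      exact mul_self_eq_zero.mp (hsum i (Finset.mem_univ i))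
    have he := hind (fun k => s' k - s k) hz0
    funext k
    have := congrFun he k
    simp only [Pi.zero_apply] at this
    linarith

/-- **Equivalence of the least-squares and Cholesky formulations (single step).**
Let `X ∈ ℝ^{m×N}` have full column rank, `H = XᵀX`, and `H⁻¹ = L Lᵀ` with `L` lower
triangular with positive diagonal.  Fix `1 ≤ t ≤ N−1`, `w ∈ ℝ^N`, `q_t ∈ ℝ`.  Then the
unique minimizer of `v ↦ ½‖(q_t − w_t) X_t + Σ_{j=t+1}^N (v_{j−t} − w_j) X_j‖²` over
`v ∈ ℝ^{N−t}` is `v* = w_{≥t+1} + Δ^{(t)}` with `Δ^{(t)} = −(w_t − q_t) L_{≥t+1,t}/L_{tt}`. -/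
theorem optq_cholesky_step_equivalence {m N t : ℕ}
    (X : Matrix (Fin m) (Fin N) ℝ) (hX : IsUnit (Xᵀ * X).det)
    (L : Matrix (Fin N) (Fin N) ℝ)
    (hLlow : ∀ i j : Fin N, i < j → L i j = 0)
    (hLdiag : ∀ i : Fin N, 0 < L i i)
    (hChol : (Xᵀ * X)⁻¹ = L * Lᵀ)
    (ht1 : 1 ≤ t) (ht2 : t ≤ N - 1) (w : Fin N → ℝ) (qt : ℝ) :
    (∀ v : Fin (N - t) → ℝ,
      (1 / 2 : ℝ) *
          (((qt - w ⟨t - 1, by omega⟩) • (fun i => X i ⟨t - 1, by omega⟩) +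
              ∑ j : Fin (N - t),
                ((w ⟨t + j.val, by have := j.isLt; omega⟩ +
                    (-(w ⟨t - 1, by omega⟩ - qt) *
                      (L ⟨t + j.val, by have := j.isLt; omega⟩ ⟨t - 1, by omega⟩ /
                        L ⟨t - 1, by omega⟩ ⟨t - 1, by omega⟩))) -
                  w ⟨t + j.val, by have := j.isLt; omega⟩) • fun i =>
                    X i ⟨t + j.val, by have := j.isLt; omega⟩) ⬝ᵥ
            ((qt - w ⟨t - 1, by omega⟩) • (fun i => X i ⟨t - 1, by omega⟩) +
              ∑ j : Fin (N - t),
                ((w ⟨t + j.val, by have := j.isLt; omega⟩ +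
                    (-(w ⟨t - 1, by omega⟩ - qt) *
                      (L ⟨t + j.val, by have := j.isLt; omega⟩ ⟨t - 1, by omega⟩ /
                        L ⟨t - 1, by omega⟩ ⟨t - 1, by omega⟩))) -
                  w ⟨t + j.val, by have := j.isLt; omega⟩) • fun i =>
                    X i ⟨t + j.val, by have := j.isLt; omega⟩)) ≤
        (1 / 2 : ℝ) *
          (((qt - w ⟨t - 1, by omega⟩) • (fun i => X i ⟨t - 1, by omega⟩) +
              ∑ j : Fin (N - t),
                (v j - w ⟨t + j.val, by have := j.isLt; omega⟩) • fun i =>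
                  X i ⟨t + j.val, by have := j.isLt; omega⟩) ⬝ᵥ
            ((qt - w ⟨t - 1, by omega⟩) • (fun i => X i ⟨t - 1, by omega⟩) +
              ∑ j : Fin (N - t),
                (v j - w ⟨t + j.val, by have := j.isLt; omega⟩) • fun i =>
                  X i ⟨t + j.val, by have := j.isLt; omega⟩))) ∧
    ∀ v : Fin (N - t) → ℝ,
      (∀ v' : Fin (N - t) → ℝ,
        (1 / 2 : ℝ) *
            (((qt - w ⟨t - 1, by omega⟩) • (fun i => X i ⟨t - 1, by omega⟩) +
                ∑ j : Fin (N - t),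
                  (v j - w ⟨t + j.val, by have := j.isLt; omega⟩) • fun i =>
                    X i ⟨t + j.val, by have := j.isLt; omega⟩) ⬝ᵥ
              ((qt - w ⟨t - 1, by omega⟩) • (fun i => X i ⟨t - 1, by omega⟩) +
                ∑ j : Fin (N - t),
                  (v j - w ⟨t + j.val, by have := j.isLt; omega⟩) • fun i =>
                    X i ⟨t + j.val, by have := j.isLt; omega⟩)) ≤
          (1 / 2 : ℝ) *
            (((qt - w ⟨t - 1, by omega⟩) • (fun i => X i ⟨t - 1, by omega⟩) +
                ∑ j : Fin (N - t),
                  (v' j - w ⟨t + j.val, by have := j.isLt; omega⟩) • fun i =>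
                    X i ⟨t + j.val, by have := j.isLt; omega⟩) ⬝ᵥ
              ((qt - w ⟨t - 1, by omega⟩) • (fun i => X i ⟨t - 1, by omega⟩) +
                ∑ j : Fin (N - t),
                  (v' j - w ⟨t + j.val, by have := j.isLt; omega⟩) • fun i =>
                    X i ⟨t + j.val, by have := j.isLt; omega⟩))) →
      v = fun j : Fin (N - t) =>
        w ⟨t + j.val, by have := j.isLt; omega⟩ +
          (-(w ⟨t - 1, by omega⟩ - qt) *
            (L ⟨t + j.val, by have := j.isLt; omega⟩ ⟨t - 1, by omega⟩ /
              L ⟨t - 1, by omega⟩ ⟨t - 1, by omega⟩)) := by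
  have hN : t < N := by omega
  let τ : Fin N := ⟨t - 1, by omega⟩
  let emb : Fin (N - t) → Fin N := fun j => ⟨t + j.val, by have := j.isLt; omega⟩
  let Y : Fin (N - t) → Fin m → ℝ := fun j => fun i => X i (emb j)
  let b : Fin m → ℝ := (qt - w τ) • fun i => X i τ
  let s : Fin (N - t) → ℝ := fun j => -(w τ - qt) * (L (emb j) τ / L τ τ)
  have hLττ : L τ τ ≠ 0 := (hLdiag τ).ne'
  -- injectivity of X on columns
  have hXinj : ∀ c : Fin N → ℝ, X *ᵥ c = 0 → c = 0 := by
    intro c hc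
    have h1 : (Xᵀ * X) *ᵥ c = 0 := by
      rw [← Matrix.mulVec_mulVec, hc, Matrix.mulVec_zero]
    calc c = ((Xᵀ * X)⁻¹ * (Xᵀ * X)) *ᵥ c := by
            rw [Matrix.nonsing_inv_mul _ hX, Matrix.one_mulVec]
      _ = (Xᵀ * X)⁻¹ *ᵥ ((Xᵀ * X) *ᵥ c) := by rw [Matrix.mulVec_mulVec]
      _ = 0 := by rw [h1, Matrix.mulVec_zero]
  -- Lᵀ is upper triangular and invertible
  have hLTblock : Lᵀ.BlockTriangular id := fun i j hij => hLlow j i hij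
  have hdetLT : IsUnit (Lᵀ).det := by
    rw [Matrix.det_of_upperTriangular hLTblock]
    have : (0 : ℝ) < ∏ i, Lᵀ i i :=
      Finset.prod_pos fun i _ => by simpa [Matrix.transpose_apply] using hLdiag i
    exact isUnit_iff_ne_zero.mpr this.ne'
  have hone : (Xᵀ * X * L) * Lᵀ = 1 := by
    rw [Matrix.mul_assoc, ← hChol, Matrix.mul_nonsing_inv _ hX]
  have hHL : Xᵀ * X * L = (Lᵀ)⁻¹ := (Matrix.inv_eq_left_inv hone).symm
  have : Invertible (Lᵀ) := (Lᵀ).invertibleOfIsUnitDet hdetLT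
  have hinvBT : ((Lᵀ)⁻¹).BlockTriangular id :=
    Matrix.blockTriangular_inv_of_blockTriangular hLTblock
  have hzero : ∀ j : Fin (N - t), (Xᵀ * X * L) (emb j) τ = 0 := by
    intro j
    rw [hHL]
    exact hinvBT (show (τ : Fin N) < emb j by
      simp only [Fin.lt_def]
      show t - 1 < t + j.val
      omega)
  have hYdot : ∀ p q : Fin N, (fun i => X i p) ⬝ᵥ (fun i => X i q) = (Xᵀ * X) p q := by
    intro p q
    simp [Matrix.mul_apply, dotProduct, Matrix.transpose_apply]
  -- orthogonality at the claimed minimizer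
  have hopt : ∀ j, Y j ⬝ᵥ (b + ∑ k, s k • Y k) = 0 := by
    intro j
    have key := hzero j
    rw [Matrix.mul_apply] at key
    have hsplit : ∑ k : Fin N, (qt - w τ) / L τ τ * (L k τ * (Xᵀ * X) (emb j) k) =
        (qt - w τ) / L τ τ * (L τ τ * (Xᵀ * X) (emb j) τ) +
        ∑ k : Fin (N - t), (qt - w τ) / L τ τ * (L (emb k) τ * (Xᵀ * X) (emb j) (emb k)) :=
      sum_split ht1 ht2 _ (fun k hk => by
        show (qt - w τ) / L τ τ * (L k τ * (Xᵀ * X) (emb j) k) = 0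
        rw [hLlow k τ (show k < τ by simp only [Fin.lt_def]; exact hk)]
        ring)
    have hsum0 : ∑ k : Fin N, ((qt - w τ) / L τ τ) * (L k τ * (Xᵀ * X) (emb j) k) = 0 := by
      rw [← Finset.mul_sum]
      have h : ∑ k : Fin N, L k τ * (Xᵀ * X) (emb j) k = 0 := by
        rw [← key]
        exact Finset.sum_congr rfl fun k _ => mul_comm _ _
      rw [h, mul_zero]
    rw [dotProduct_add, dotProduct_sum', dotProduct_smul]
    have e1 : Y j ⬝ᵥ (fun i => X i τ) = (Xᵀ * X) (emb j) τ := hYdot _ _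
    have e2 : ∀ k, Y j ⬝ᵥ Y k = (Xᵀ * X) (emb j) (emb k) := fun k => hYdot _ _
    rw [smul_eq_mul, e1]
    have e3 : ∑ k, s k * (Y j ⬝ᵥ Y k) =
        ∑ k : Fin (N - t), ((qt - w τ) / L τ τ) *
          (L (emb k) τ * (Xᵀ * X) (emb j) (emb k)) := by
      refine Finset.sum_congr rfl fun k _ => ?_
      rw [e2 k]
      show -(w τ - qt) * (L (emb k) τ / L τ τ) * (Xᵀ * X) (emb j) (emb k) = _
      field_simp
      ring
    rw [e3]
    have e4 : (qt - w τ) * (Xᵀ * X) (emb j) τ =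
        ((qt - w τ) / L τ τ) * (L τ τ * (Xᵀ * X) (emb j) τ) := by
      field_simp
    rw [e4, ← hsplit]
    exact hsum0
  -- linear independence of the tail columns
  have hind : ∀ e : Fin (N - t) → ℝ, (∑ j, e j • Y j) = 0 → e = 0 := by
    intro e he
    let c : Fin N → ℝ := fun k => if h : t ≤ k.val then e ⟨k.val - t, by omega⟩ else 0
    have hXc : X *ᵥ c = 0 := by
      funext i
      have hsplit : ∑ k : Fin N, X i k * c k =
          X i τ * c τ + ∑ j : Fin (N - t), X i (emb j) * c (emb j) :=
        sum_split ht1 ht2 _ (fun k hk => by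
          show X i k * c k = 0
          have hkk : ¬ t ≤ k.val := by omega
          simp [c, hkk])
      have hcτ : c τ = 0 := by
        have : ¬ t ≤ (τ : Fin N).val := by
          show ¬ t ≤ t - 1
          omega
        simp [c, this]
      have hcemb : ∀ j : Fin (N - t), c (emb j) = e j := by
        intro j
        have h1 : t ≤ (emb j).val := by
          show t ≤ t + j.val
          omega
        simp only [c, dif_pos h1]
        congr 1
        ext
        show t + j.val - t = j.val
        omega
      have he' := congrFun he i
      simp only [Finset.sum_apply, Pi.smul_apply, smul_eq_mul, Pi.zero_apply] at he'
      show ∑ k : Fin N, X i k * c k = 0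
      rw [hsplit, hcτ, mul_zero, zero_add, ← he']
      exact Finset.sum_congr rfl fun j _ => by
        rw [hcemb j]
        ring
    have hc0 := hXinj c hXc
    funext j
    have := congrFun hc0 (emb j)
    have h1 : t ≤ (emb j).val := by
      show t ≤ t + j.val
      omega
    simp only [c, dif_pos h1, Pi.zero_apply] at this
    have hj : (⟨(emb j).val - t, by have := j.isLt; omega⟩ : Fin (N - t)) = j := by
      ext
      show t + j.val - t = j.val
      omega
    rw [hj] at this
    exact this
  obtain ⟨h1, h2⟩ := quad_aux Y b hind s hopt
  constructor
  · intro v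
    simp only [add_sub_cancel_left]
    exact h1 fun j => v j - w (emb j)
  · intro v hv
    have hs : (fun j => v j - w (emb j)) = s := by
      refine h2 (fun j => v j - w (emb j)) fun s'' => ?_
      have := hv (fun j => s'' j + w (emb j))
      simpa only [emb, add_sub_cancel_right] using this
    funext j
    have hsj : v j - w (emb j) = s j := congrFun hs j
    show v j = w (emb j) + s j
    linarith
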